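/- Let (H, d) be a metric space, F: H → ℝ ∪ {+∞} lower semicontinuous, nonnegative, with the property that every φ ∈ H with F(φ) = 0 lies in a single G-orbit O (for an isometric G-action), and suppose every sequence u_i with d(0, u_i) = 1 and F(u_i) → 0 has a d-convergent subsequence. If there exist φ_i with F(φ_i)/d(0, φ_i) → 0 and d(0, σ·φ_i) → ∞ for all σ ∈ G, then, applying the geodesic convexity slope argument, one obtains a point u with F(u) = 0 and d_G(0, u) = 1, contradicting 0 ∈ O and transitivity; hence F(φ) ≥ C·d_G(0, φ) − D for some constants C, D > 0. -/

import Mathlib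

/-!
Suppose `F` is not coercive for `d_G(z, ·) = infDist · (orbit G z)`: there are `φ` with
`d_G(z, φ) > 1` and slope `F φ / d_G(z, φ)` as small as we like. Walk from a nearly closest
orbit point `τ • z` towards `φ` along the geodesic up to distance one: since `F (τ • z) = 0`,
convexity bounds `F` there by the slope, while the point stays at distance almost one from
the orbit. Translating back by `τ⁻¹` gives points at distance one from `z`, with `F → 0` and
`d_G > 1/2`. A subsequential limit is a zero of `F` by lower semicontinuity, hence lies in
the orbit, where `d_G` vanishes; but `d_G` is continuous, so it is at least `1/2` there.
-/

open Filter Set Metric MulAction Topology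

theorem LowerSemicontinuous.le_of_tendsto {X γ ι : Type*} [TopologicalSpace X] [LinearOrder γ]
    [DenselyOrdered γ] [TopologicalSpace γ] [OrderTopology γ] {F : X → γ}
    (hF : LowerSemicontinuous F) {l : Filter ι} [l.NeBot] {u : ι → X} {v : X} {c : γ}
    (hu : Tendsto u l (𝓝 v)) (hFu : Tendsto (fun i => F (u i)) l (𝓝 c)) : F v ≤ c :=
  le_of_forall_gt_imp_ge_of_dense fun _ hc => (hF.isClosed_preimage _).mem_of_tendsto hu <|
    (hFu.eventually (gt_mem_nhds hc)).mono fun _ => le_of_lt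

structure IsConstSpeedGeodesic {H : Type*} [PseudoMetricSpace H] (γ : ℝ → H) (x y : H) :
    Prop where
  apply_zero : γ 0 = x
  apply_one : γ 1 = y
  dist_eq : ∀ s ∈ Icc (0 : ℝ) 1, ∀ t ∈ Icc (0 : ℝ) 1,
    dist (γ s) (γ t) = |s - t| * dist x y

namespace IsConstSpeedGeodesic

variable {H : Type*} [PseudoMetricSpace H] {γ : ℝ → H} {x y : H} {t : ℝ}

theorem dist_left (hγ : IsConstSpeedGeodesic γ x y) (ht : t ∈ Icc (0 : ℝ) 1) :
    dist x (γ t) = t * dist x y := by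
  simpa [hγ.apply_zero, abs_of_nonneg ht.1] using hγ.dist_eq 0 (left_mem_Icc.2 zero_le_one) t ht

theorem dist_right (hγ : IsConstSpeedGeodesic γ x y) (ht : t ∈ Icc (0 : ℝ) 1) :
    dist (γ t) y = (1 - t) * dist x y := by
  simpa [hγ.apply_one, abs_of_nonpos (sub_nonpos.2 ht.2)] using
    hγ.dist_eq t ht 1 (right_mem_Icc.2 zero_le_one)

theorem le_mul_of_eq_zero (hγ : IsConstSpeedGeodesic γ x y) {F : H → ℝ}
    (hF : ConvexOn ℝ (Icc 0 1) fun t => F (γ t)) (hx : F x = 0) (ht : t ∈ Icc (0 : ℝ) 1) :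
    F (γ t) ≤ t * F y := by
  simpa [hγ.apply_zero, hγ.apply_one, hx] using
    hF.2 (left_mem_Icc.2 zero_le_one) (right_mem_Icc.2 zero_le_one) (sub_nonneg.2 ht.2) ht.1
      (sub_add_cancel 1 t)

theorem exists_dist_eq_one (hγ : IsConstSpeedGeodesic γ x y) {F : H → ℝ}
    (hF : ConvexOn ℝ (Icc 0 1) fun t => F (γ t)) (hx : F x = 0) (hxy : 1 ≤ dist x y) :
    ∃ u, dist x u = 1 ∧ dist u y = dist x y - 1 ∧ F u ≤ F y / dist x y := by
  have hpos : 0 < dist x y := zero_lt_one.trans_le hxy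
  have ht : 1 / dist x y ∈ Icc (0 : ℝ) 1 := ⟨by positivity, (div_le_one hpos).2 hxy⟩
  refine ⟨γ (1 / dist x y), ?_, ?_, ?_⟩
  · rw [hγ.dist_left ht, one_div_mul_cancel hpos.ne']
  · rw [hγ.dist_right ht, sub_mul, one_div_mul_cancel hpos.ne', one_mul]
  · simpa [div_eq_inv_mul] using hγ.le_mul_of_eq_zero hF hx ht

end IsConstSpeedGeodesic

section OrbitDistance

variable {G H : Type*} [Group G] [PseudoMetricSpace H] [MulAction G H] [IsIsometricSMul G H]

theorem iInf_dist_smul_eq_infDist_orbit (z φ : H) :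
    ⨅ σ : G, dist z (σ • φ) = infDist φ (orbit G z) := by
  rw [infDist_eq_iInf, orbit, iInf_range', ← (Equiv.inv G).iInf_comp]
  refine iInf_congr fun σ => ?_
  rw [← dist_smul σ, Equiv.inv_apply, smul_inv_smul, dist_comm]

theorem infDist_smul_orbit (σ : G) (x z : H) :
    infDist (σ • x) (orbit G z) = infDist x (orbit G z) := by
  simp only [infDist]
  rw [← infEDist_smul σ x, smul_orbit]

theorem exists_dist_eq_one_of_one_lt_infDist_orbit {geod : H → H → ℝ → H}
    (hgeod : ∀ x y, IsConstSpeedGeodesic (geod x y) x y) {F : H → ℝ}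
    (hconv : ∀ x y, ConvexOn ℝ (Icc 0 1) fun t => F (geod x y t))
    (hGinv : ∀ (σ : G) φ, F (σ • φ) = F φ) {z : H} (hz : F z = 0) {φ : H}
    (hFφ : 0 ≤ F φ)
    (hφ : 1 < infDist φ (orbit G z)) {δ : ℝ} (hδ : 0 < δ) :
    ∃ u, dist z u = 1 ∧ F u ≤ F φ / infDist φ (orbit G z) ∧
      1 - δ < infDist u (orbit G z) := by
  set d := infDist φ (orbit G z)
  obtain ⟨_, ⟨τ, rfl⟩, hτ⟩ :=
    (infDist_lt_iff (nonempty_orbit z)).1 (lt_add_of_pos_right d hδ)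
  have hd : d ≤ dist (τ • z) φ :=
    dist_comm φ (τ • z) ▸ infDist_le_dist_of_mem (mem_orbit z τ)
  obtain ⟨u, hu, huφ, hFu⟩ :=
    (hgeod (τ • z) φ).exists_dist_eq_one (hconv _ _) (by rw [hGinv, hz]) (by linarith)
  refine ⟨τ⁻¹ • u, ?_, ?_, ?_⟩
  · rw [← dist_smul τ, smul_inv_smul, hu]
  · rw [hGinv]
    exact hFu.trans (div_le_div_of_nonneg_left hFφ (by linarith) hd)
  · have : d ≤ infDist u (orbit G z) + dist φ u := infDist_le_infDist_add_dist
    rw [infDist_smul_orbit]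
    linarith [dist_comm φ u, dist_comm φ (τ • z)]

end OrbitDistance

/-- Abstract skeleton of "existence implies properness": if `F ≥ 0` is lower
semicontinuous, convex along geodesics, invariant under an isometric `G`-action,
vanishes exactly on the `G`-orbit of the base point `z` with `F z = 0`, and
sequences at distance 1 from `z` with `F → 0` subconverge, then `F` is coercive
with respect to the relative distance `d_G(z, ·) = inf_σ d(z, σ·φ)`. -/
theorem stmt_9 {H : Type*} [MetricSpace H] {G : Type*} [Group G] [MulAction G H]
    (hisom : ∀ (σ : G) (x y : H), dist (σ • x) (σ • y) = dist x y)
    (geod : H → H → ℝ → H)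
    (hg0 : ∀ x y, geod x y 0 = x) (hg1 : ∀ x y, geod x y 1 = y)
    (hspeed : ∀ x y, ∀ s ∈ Set.Icc (0:ℝ) 1, ∀ t ∈ Set.Icc (0:ℝ) 1,
      dist (geod x y s) (geod x y t) = |s - t| * dist x y)
    (F : H → ℝ)
    (hconv : ∀ x y, ConvexOn ℝ (Set.Icc (0:ℝ) 1) (fun t => F (geod x y t)))
    (hlsc : LowerSemicontinuous F)
    (hnn : ∀ φ, 0 ≤ F φ)
    (hGinv : ∀ (σ : G) (φ : H), F (σ • φ) = F φ)
    (z : H) (hz : F z = 0)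
    (hzero : ∀ φ : H, F φ = 0 → ∃ σ : G, φ = σ • z)
    (hcpt : ∀ u : ℕ → H, (∀ i, dist z (u i) = 1) →
      Tendsto (fun i => F (u i)) atTop (nhds 0) →
      ∃ (v : H) (ψ : ℕ → ℕ), StrictMono ψ ∧
        Tendsto (fun i => dist (u (ψ i)) v) atTop (nhds 0)) :
    ∃ C > (0:ℝ), ∃ D > (0:ℝ), ∀ φ : H,
      C * (⨅ σ : G, dist z (σ • φ)) - D ≤ F φ := by
  have : IsIsometricSMul G H := ⟨fun σ => .of_dist_eq (hisom σ)⟩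
  have hgeod x y : IsConstSpeedGeodesic (geod x y) x y := ⟨hg0 x y, hg1 x y, hspeed x y⟩
  simp_rw [iInf_dist_smul_eq_infDist_orbit]
  by_contra! hcoer
  have hfar (n : ℕ) :
      ∃ u, dist z u = 1 ∧ F u ≤ 1 / (n + 1) ∧ 1 / 2 < infDist u (orbit G z) := by
    have hε : (0 : ℝ) < 1 / (n + 1) := Nat.one_div_pos_of_nat
    obtain ⟨φ, hφ⟩ := hcoer _ hε _ hε
    have hφ1 : 1 < infDist φ (orbit G z) := by nlinarith [hnn φ]
    obtain ⟨u, hu, hFu, hdu⟩ := exists_dist_eq_one_of_one_lt_infDist_orbit hgeod hconv hGinv hz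
      (hnn φ) hφ1 one_half_pos
    refine ⟨u, hu, hFu.trans (div_le_of_le_mul₀ (by positivity) hε.le (by linarith)), ?_⟩
    linarith
  choose u hu hFu hdu using hfar
  have hFu0 : Tendsto (fun n => F (u n)) atTop (𝓝 0) :=
    squeeze_zero (fun n => hnn _) hFu tendsto_one_div_add_atTop_nhds_zero_nat
  obtain ⟨v, s, hs, hsv⟩ := hcpt u hu hFu0
  have hsv' : Tendsto (u ∘ s) atTop (𝓝 v) := tendsto_iff_dist_tendsto_zero.2 hsv
  have hFv : F v = 0 :=
    le_antisymm (hlsc.le_of_tendsto hsv' (hFu0.comp hs.tendsto_atTop)) (hnn v)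
  obtain ⟨τ, rfl⟩ := hzero v hFv
  have hlim : Tendsto (fun i => infDist (u (s i)) (orbit G z)) atTop (𝓝 0) := by
    rw [← infDist_zero_of_mem (mem_orbit z τ)]
    exact (lipschitz_infDist_pt _).continuous.tendsto _ |>.comp hsv'
  linarith [ge_of_tendsto' hlim fun i => (hdu (s i)).le]
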